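/- The vector of Bernstein coefficients of the shifted Legendre polynomial L^k, elevated to degree n, is an eigenvector of the Bernstein mass matrix M^n with eigenvalue λ^n_k = (n!)^2 / ((n+k+1)! (n-k)!), for 0 ≤ k ≤ n. -/

import Mathlib

/-- The Bernstein polynomial `B^n_i` as a real function. -/
noncomputable def bern (n i : ℕ) (x : ℝ) : ℝ :=
  (n.choose i : ℝ) * x ^ i * (1 - x) ^ (n - i)

/-- The Bernstein mass matrix `M^n`. -/
noncomputable def bmass (n : ℕ) : Matrix (Fin (n + 1)) (Fin (n + 1)) ℝ :=
  fun i j => ∫ x in (0:ℝ)..1, bern n i x * bern n j x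

/-- The degree elevation matrix `E^{m,n}` (out-of-range binomials are zero). -/
noncomputable def elev (m n : ℕ) : Matrix (Fin (n + 1)) (Fin (m + 1)) ℝ :=
  fun i j =>
    if (j : ℕ) ≤ (i : ℕ) then
      (m.choose j : ℝ) * ((n - m).choose ((i : ℕ) - (j : ℕ)) : ℝ) / (n.choose i : ℝ)
    else 0

/-- Bernstein coefficient vector of the degree-`k` shifted Legendre polynomial. -/
noncomputable def legCoeff (k : ℕ) : Fin (k + 1) → ℝ :=
  fun i => (-1 : ℝ) ^ (k + (i : ℕ)) * (k.choose i : ℝ)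

open intervalIntegral Finset

lemma bern_cont (n i : ℕ) : Continuous (bern n i) := by
  unfold bern; continuity

lemma beta_int (p q : ℕ) :
    ∫ x in (0:ℝ)..1, x ^ p * (1 - x) ^ q
      = (Nat.factorial p : ℝ) * Nat.factorial q / Nat.factorial (p + q + 1) := by
  induction p generalizing q with
  | zero =>
    simp only [pow_zero, one_mul]
    have : ∫ x in (0:ℝ)..1, (1 - x) ^ q = ∫ x in (0:ℝ)..1, x ^ q := by
      have := intervalIntegral.integral_comp_sub_left (a := (0:ℝ)) (b := 1)
        (fun x => x ^ q) 1
      simpa using this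
    rw [this, integral_pow]
    have h0 : (0:ℕ) + q + 1 = q + 1 := by omega
    rw [h0, Nat.factorial_succ, Nat.factorial_zero]
    rw [div_eq_div_iff (by positivity) (by positivity)]
    push_cast
    ring
  | succ p ih =>
    have key : ∫ x in (0:ℝ)..1, x ^ (p+1) * (1 - x) ^ q
        = (∫ x in (0:ℝ)..1, x ^ p * (1 - x) ^ q)
          - ∫ x in (0:ℝ)..1, x ^ p * (1 - x) ^ (q+1) := by
      rw [← intervalIntegral.integral_sub
        ((Continuous.intervalIntegrable (by continuity)) 0 1)
        ((Continuous.intervalIntegrable (by continuity)) 0 1)]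
      apply intervalIntegral.integral_congr
      intro x _
      ring
    rw [key, ih q, ih (q+1)]
    have h1 : p + 1 + q + 1 = p + q + 1 + 1 := by omega
    have h2 : p + (q + 1) + 1 = p + q + 1 + 1 := by omega
    rw [h1, h2]
    have hf : (0:ℝ) < Nat.factorial (p + q + 1) := by positivity
    rw [Nat.factorial_succ (p+q+1), Nat.factorial_succ p, Nat.factorial_succ q]
    field_simp
    push_cast; ring

lemma bern_int {n i k l : ℕ} (hi : i ≤ n) (hl : l ≤ k) :
    ∫ x in (0:ℝ)..1, bern n i x * bern k l x
      = (n.choose i : ℝ) * (k.choose l) * Nat.factorial (i + l)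
          * Nat.factorial ((n - i) + (k - l)) / Nat.factorial (n + k + 1) := by
  have : ∀ x : ℝ, bern n i x * bern k l x
      = ((n.choose i : ℝ) * (k.choose l)) * (x ^ (i + l) * (1 - x) ^ ((n - i) + (k - l))) := by
    intro x; unfold bern; rw [pow_add, pow_add]; ring
  rw [intervalIntegral.integral_congr (fun x _ => this x),
    intervalIntegral.integral_const_mul, beta_int]
  have : i + l + ((n - i) + (k - l)) + 1 = n + k + 1 := by omega
  rw [this]
  ring

lemma one_sub_pow_expand (N : ℕ) (x : ℝ) :
    (1:ℝ) = ∑ m ∈ range (N + 1), (N.choose m : ℝ) * x ^ m * (1 - x) ^ (N - m) := by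
  have h := add_pow x (1 - x) N
  simp only [add_sub_cancel] at h
  rw [one_pow] at h
  conv_lhs => rw [h]
  apply Finset.sum_congr rfl
  intro m hm
  rw [mem_range] at hm
  ring

lemma elev_sum {n k l : ℕ} (hk : k ≤ n) (hl : l ≤ k) (x : ℝ) :
    ∑ j ∈ range (n + 1),
        (if l ≤ j then ((k.choose l : ℝ) * ((n - k).choose (j - l)) / (n.choose j)) else 0)
          * bern n j x
      = bern k l x := by
  have step1 : ∀ j ∈ range (n + 1),
      (if l ≤ j then ((k.choose l : ℝ) * ((n - k).choose (j - l)) / (n.choose j)) else 0)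
          * bern n j x
        = if l ≤ j then ((k.choose l : ℝ) * ((n - k).choose (j - l)) * x ^ j * (1 - x) ^ (n - j)) else 0 := by
    intro j hj
    rw [mem_range] at hj
    have hnj : (n.choose j : ℝ) ≠ 0 := by
      have := Nat.choose_pos (show j ≤ n by omega)
      positivity
    split
    · unfold bern; field_simp
    · ring
  rw [Finset.sum_congr rfl step1]
  have hsplit : range (n + 1) = Finset.Ico 0 (n + 1) := by rw [Finset.range_eq_Ico]
  rw [hsplit, ← Finset.sum_Ico_consecutive _ (Nat.zero_le l) (by omega : l ≤ n + 1)]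
  have hz : ∑ j ∈ Finset.Ico 0 l,
      (if l ≤ j then ((k.choose l : ℝ) * ((n - k).choose (j - l)) * x ^ j * (1 - x) ^ (n - j)) else 0) = 0 := by
    apply Finset.sum_eq_zero
    intro j hj
    rw [Finset.mem_Ico] at hj
    rw [if_neg (by omega)]
  rw [hz, zero_add]
  have hone : ∑ j ∈ Finset.Ico l (n + 1),
      (if l ≤ j then ((k.choose l : ℝ) * ((n - k).choose (j - l)) * x ^ j * (1 - x) ^ (n - j)) else 0)
      = ∑ m ∈ range (n + 1 - l),
          ((k.choose l : ℝ) * ((n - k).choose m) * x ^ (l + m) * (1 - x) ^ (n - (l + m))) := by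
    rw [Finset.sum_Ico_eq_sum_range]
    apply Finset.sum_congr rfl
    intro m _
    rw [if_pos (by omega : l ≤ l + m)]
    have hml : l + m - l = m := by omega
    rw [hml]
  rw [hone]
  have htrunc : ∑ m ∈ range (n + 1 - l),
      ((k.choose l : ℝ) * ((n - k).choose m) * x ^ (l + m) * (1 - x) ^ (n - (l + m)))
      = ∑ m ∈ range (n - k + 1),
          ((k.choose l : ℝ) * ((n - k).choose m) * x ^ (l + m) * (1 - x) ^ (n - (l + m))) := by
    symm
    apply Finset.sum_subset
    · intro m hm; rw [mem_range] at *; omega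
    · intro m hm1 hm2
      rw [mem_range] at *
      have : (n - k).choose m = 0 := Nat.choose_eq_zero_of_lt (by omega)
      rw [this]
      push_cast
      ring
  rw [htrunc]
  have hrhs : bern k l x = (k.choose l : ℝ) * x ^ l * (1 - x) ^ (k - l) *
      ∑ m ∈ range (n - k + 1), ((n - k).choose m : ℝ) * x ^ m * (1 - x) ^ ((n - k) - m) := by
    rw [← one_sub_pow_expand (n - k) x]
    unfold bern; ring
  rw [hrhs, Finset.mul_sum]
  apply Finset.sum_congr rfl
  intro m hm
  rw [mem_range] at hm
  have h1 : (k - l) + ((n - k) - m) = n - (l + m) := by omega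
  rw [← h1, pow_add (1 - x), pow_add x]
  ring

lemma alt_sum_real (N : ℕ) :
    ∑ m ∈ range (N + 1), (-1:ℝ)^m * (N.choose m : ℝ) = if N = 0 then 1 else 0 := by
  have h := Int.alternating_sum_range_choose (n := N)
  have := congrArg (fun z : ℤ => (z : ℝ)) h
  push_cast at this
  rw [this]

lemma alt_sum_choose_mul (K b : ℕ) :
    ∑ m ∈ range (K + 1), (-1:ℝ)^m * (K.choose m : ℝ) * ((K - m).choose b : ℝ)
      = if b = K then 1 else 0 := by
  by_cases hb : b ≤ K
  · have step : ∀ m ∈ range (K + 1),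
        (-1:ℝ)^m * (K.choose m : ℝ) * ((K - m).choose b : ℝ)
          = (K.choose b : ℝ) * ((-1:ℝ)^m * ((K - b).choose m : ℝ)) := by
      intro m hm
      rw [mem_range] at hm
      by_cases hmb : m ≤ K - b
      · have h1 : K.choose m = K.choose (K - m) := (Nat.choose_symm (by omega)).symm
        have h2 : K.choose (K - m) * (K - m).choose b
            = K.choose b * (K - b).choose ((K - m) - b) :=
          Nat.choose_mul (by omega)
        have h3 : (K - m) - b = (K - b) - m := by omega
        have h4 : (K - b).choose ((K - b) - m) = (K - b).choose m :=
          Nat.choose_symm (by omega)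
        have : K.choose m * (K - m).choose b = K.choose b * (K - b).choose m := by
          rw [h1, h2, h3, h4]
        have := congrArg (fun z : ℕ => (z : ℝ)) this
        push_cast at this
        linear_combination ((-1:ℝ)^m) * this
      · have h5 : (K - m).choose b = 0 := Nat.choose_eq_zero_of_lt (by omega)
        have h6 : (K - b).choose m = 0 := Nat.choose_eq_zero_of_lt (by omega)
        rw [h5, h6]
        push_cast
        ring
    rw [Finset.sum_congr rfl step, ← Finset.mul_sum]
    have htr : ∑ m ∈ range (K + 1), (-1:ℝ)^m * ((K - b).choose m : ℝ)
        = ∑ m ∈ range ((K - b) + 1), (-1:ℝ)^m * ((K - b).choose m : ℝ) := by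
      symm
      apply Finset.sum_subset
      · intro m hm; rw [mem_range] at *; omega
      · intro m _ hm2
        rw [mem_range] at hm2
        rw [Nat.choose_eq_zero_of_lt (by omega)]
        push_cast; ring
    rw [htr, alt_sum_real]
    by_cases hbK : b = K
    · subst hbK; simp
    · rw [if_neg (by omega), if_neg hbK, mul_zero]
  · rw [if_neg (by omega)]
    apply Finset.sum_eq_zero
    intro m hm
    rw [mem_range] at hm
    rw [show ((K - m).choose b) = 0 from Nat.choose_eq_zero_of_lt (by omega)]
    push_cast; ring

lemma inner_collapse (k a b : ℕ) (ha : a ≤ k) :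
    ∑ l ∈ range (k + 1), (-1:ℝ)^l * (k.choose l : ℝ) * (l.choose a : ℝ) * ((k - l).choose b : ℝ)
      = if a + b = k then (-1:ℝ)^a * (k.choose a : ℝ) else 0 := by
  have hz : ∀ l ∈ range a, (-1:ℝ)^l * (k.choose l : ℝ) * (l.choose a : ℝ) * ((k - l).choose b : ℝ) = 0 := by
    intro l hl
    rw [mem_range] at hl
    rw [show (l.choose a) = 0 from Nat.choose_eq_zero_of_lt (by omega)]
    push_cast; ring
  rw [range_eq_Ico, ← Finset.sum_Ico_consecutive _ (Nat.zero_le a) (by omega : a ≤ k + 1)]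
  rw [← range_eq_Ico, Finset.sum_eq_zero hz, zero_add]
  rw [Finset.sum_Ico_eq_sum_range]
  have step : ∀ m ∈ range (k + 1 - a),
      (-1:ℝ)^(a + m) * (k.choose (a + m) : ℝ) * ((a + m).choose a : ℝ) * ((k - (a + m)).choose b : ℝ)
        = ((-1:ℝ)^a * (k.choose a : ℝ)) *
            ((-1:ℝ)^m * ((k - a).choose m : ℝ) * (((k - a) - m).choose b : ℝ)) := by
    intro m hm
    rw [mem_range] at hm
    have h2 : k.choose (a + m) * (a + m).choose a = k.choose a * (k - a).choose ((a + m) - a) :=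
      Nat.choose_mul (by omega)
    have h3 : (a + m) - a = m := by omega
    rw [h3] at h2
    have h4 : k - (a + m) = (k - a) - m := by omega
    rw [h4]
    have := congrArg (fun z : ℕ => (z : ℝ)) h2
    push_cast at this
    rw [pow_add]
    linear_combination ((-1:ℝ)^a * (-1:ℝ)^m * (((k - a) - m).choose b : ℝ)) * this
  rw [Finset.sum_congr rfl step, ← Finset.mul_sum]
  have h5 : k + 1 - a = (k - a) + 1 := by omega
  rw [h5, alt_sum_choose_mul]
  by_cases hab : a + b = k
  · rw [if_pos (by omega), if_pos hab, mul_one]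
  · rw [if_neg (by omega), if_neg hab, mul_zero]

lemma vand_real (i l K : ℕ) (hlK : l ≤ K) :
    ((i + l).choose l : ℝ) = ∑ a ∈ range (K + 1), (i.choose a : ℝ) * (l.choose a : ℝ) := by
  have h := Nat.add_choose_eq i l l
  rw [Finset.Nat.sum_antidiagonal_eq_sum_range_succ_mk] at h
  have h2 : ∑ a ∈ range (l + 1), i.choose a * l.choose (l - a)
      = ∑ a ∈ range (l + 1), i.choose a * l.choose a := by
    apply Finset.sum_congr rfl
    intro a hax
    rw [mem_range] at hax
    rw [Nat.choose_symm (by omega)]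
  rw [h2] at h
  have h3 : ∑ a ∈ range (K + 1), (i.choose a : ℝ) * (l.choose a : ℝ)
      = ∑ a ∈ range (l + 1), (i.choose a : ℝ) * (l.choose a : ℝ) := by
    symm
    apply Finset.sum_subset
    · intro a hax; rw [mem_range] at *; omega
    · intro a _ hax
      rw [mem_range] at hax
      rw [show (l.choose a) = 0 from Nat.choose_eq_zero_of_lt (by omega)]
      push_cast; ring
  rw [h3, h]
  push_cast
  rfl

lemma star (k i y : ℕ) :
    ∑ l ∈ range (k + 1),
        (-1:ℝ)^l * (k.choose l : ℝ) * ((i + l).choose i : ℝ) * ((y + (k - l)).choose y : ℝ)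
      = ∑ l ∈ range (k + 1),
          (-1:ℝ)^l * (k.choose l : ℝ) * (i.choose l : ℝ) * (y.choose (k - l) : ℝ) := by
  have expand : ∀ l ∈ range (k + 1),
      (-1:ℝ)^l * (k.choose l : ℝ) * ((i + l).choose i : ℝ) * ((y + (k - l)).choose y : ℝ)
        = ∑ a ∈ range (k + 1), ∑ b ∈ range (k + 1),
            (i.choose a : ℝ) * (y.choose b : ℝ) *
              ((-1:ℝ)^l * (k.choose l : ℝ) * (l.choose a : ℝ) * ((k - l).choose b : ℝ)) := by
    intro l hl
    rw [mem_range] at hl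
    have hA : ((i + l).choose i : ℝ) = ∑ a ∈ range (k + 1), (i.choose a : ℝ) * (l.choose a : ℝ) := by
      rw [show (i + l).choose i = (i + l).choose l from Nat.choose_symm_add]
      exact vand_real i l k (by omega)
    have hB : ((y + (k - l)).choose y : ℝ)
        = ∑ b ∈ range (k + 1), (y.choose b : ℝ) * ((k - l).choose b : ℝ) := by
      rw [show (y + (k - l)).choose y = (y + (k - l)).choose (k - l) from Nat.choose_symm_add]
      exact vand_real y (k - l) k (by omega)
    rw [hA, hB, Finset.mul_sum, Finset.sum_comm]
    apply Finset.sum_congr rfl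
    intro b _
    rw [Finset.mul_sum, Finset.sum_mul]
    apply Finset.sum_congr rfl
    intro a _
    ring
  rw [Finset.sum_congr rfl expand]
  rw [Finset.sum_comm]
  have inner2 : ∀ a ∈ range (k + 1),
      ∑ l ∈ range (k + 1), ∑ b ∈ range (k + 1),
          (i.choose a : ℝ) * (y.choose b : ℝ) *
            ((-1:ℝ)^l * (k.choose l : ℝ) * (l.choose a : ℝ) * ((k - l).choose b : ℝ))
        = (-1:ℝ)^a * (k.choose a : ℝ) * (i.choose a : ℝ) * (y.choose (k - a) : ℝ) := by
    intro a ha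
    rw [mem_range] at ha
    rw [Finset.sum_comm]
    have hb1 : ∀ b ∈ range (k + 1),
        ∑ l ∈ range (k + 1),
            (i.choose a : ℝ) * (y.choose b : ℝ) *
              ((-1:ℝ)^l * (k.choose l : ℝ) * (l.choose a : ℝ) * ((k - l).choose b : ℝ))
          = (i.choose a : ℝ) * (y.choose b : ℝ) *
              (if a + b = k then (-1:ℝ)^a * (k.choose a : ℝ) else 0) := by
      intro b _
      rw [← Finset.mul_sum, inner_collapse k a b (by omega)]
    rw [Finset.sum_congr rfl hb1]
    have hb2 : ∀ b ∈ range (k + 1),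
        (i.choose a : ℝ) * (y.choose b : ℝ) *
            (if a + b = k then (-1:ℝ)^a * (k.choose a : ℝ) else 0)
          = if b = k - a then (i.choose a : ℝ) * (y.choose b : ℝ) * ((-1:ℝ)^a * (k.choose a : ℝ)) else 0 := by
      intro b _
      by_cases hab : a + b = k
      · rw [if_pos hab, if_pos (by omega)]
      · rw [if_neg hab, if_neg (by omega), mul_zero]
    rw [Finset.sum_congr rfl hb2, Finset.sum_ite_eq' (range (k + 1)) (k - a)]
    rw [if_pos (by rw [mem_range]; omega)]
    ring
  rw [Finset.sum_congr rfl inner2]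

lemma lhs_term {n k i l : ℕ} (hk : k ≤ n) (hi : i ≤ n) (hl : l ≤ k) :
    ((-1:ℝ)^(k+l) * (k.choose l : ℝ)) *
        ((n.choose i : ℝ) * (k.choose l : ℝ) * (Nat.factorial (i+l) : ℝ)
          * (Nat.factorial ((n-i)+(k-l)) : ℝ) / (Nat.factorial (n+k+1) : ℝ))
      = ((-1:ℝ)^k * (n.choose i : ℝ) * (Nat.factorial i : ℝ) * (Nat.factorial (n-i) : ℝ)
            * (Nat.factorial k : ℝ) / (Nat.factorial (n+k+1) : ℝ)) *
          ((-1:ℝ)^l * (k.choose l : ℝ) * (((i+l).choose i : ℝ))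
            * ((((n-i)+(k-l)).choose (n-i) : ℝ))) := by
  have e1 : ((k.choose l : ℝ)) = (Nat.factorial k : ℝ) / ((Nat.factorial l : ℝ) * (Nat.factorial (k-l) : ℝ)) := by
    rw [Nat.cast_choose ℝ hl]
  have e2 : (((i+l).choose i : ℝ)) = (Nat.factorial (i+l) : ℝ) / ((Nat.factorial i : ℝ) * (Nat.factorial l : ℝ)) := by
    rw [Nat.cast_choose ℝ (by omega : i ≤ i + l), show i + l - i = l from by omega]
  have e3 : ((((n-i)+(k-l)).choose (n-i) : ℝ))
      = (Nat.factorial ((n-i)+(k-l)) : ℝ) / ((Nat.factorial (n-i) : ℝ) * (Nat.factorial (k-l) : ℝ)) := by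
    rw [Nat.cast_choose ℝ (by omega : n - i ≤ (n-i) + (k-l)),
      show (n-i) + (k-l) - (n-i) = k - l from by omega]
  rw [e1, e2, e3, pow_add]
  have f1 : (Nat.factorial l : ℝ) ≠ 0 := by positivity
  have f2 : (Nat.factorial (k-l) : ℝ) ≠ 0 := by positivity
  have f3 : (Nat.factorial i : ℝ) ≠ 0 := by positivity
  have f4 : (Nat.factorial (n-i) : ℝ) ≠ 0 := by positivity
  have f5 : (Nat.factorial (n+k+1) : ℝ) ≠ 0 := by positivity
  field_simp

lemma rhs_term {n k i l : ℕ} (hk : k ≤ n) (hi : i ≤ n) (hl : l ≤ k) :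
    ((Nat.factorial n : ℝ)^2 / ((Nat.factorial (n+k+1) : ℝ) * (Nat.factorial (n-k) : ℝ))) *
        ((if l ≤ i then (k.choose l : ℝ) * ((n-k).choose (i-l) : ℝ) / (n.choose i : ℝ) else 0) *
          ((-1:ℝ)^(k+l) * (k.choose l : ℝ)))
      = ((-1:ℝ)^k * (n.choose i : ℝ) * (Nat.factorial i : ℝ) * (Nat.factorial (n-i) : ℝ)
            * (Nat.factorial k : ℝ) / (Nat.factorial (n+k+1) : ℝ)) *
          ((-1:ℝ)^l * (k.choose l : ℝ) * ((i.choose l : ℝ)) * (((n-i).choose (k-l) : ℝ))) := by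
  by_cases hli : l ≤ i
  · rw [if_pos hli]
    by_cases hd : i - l ≤ n - k
    · have e1 : ((k.choose l : ℝ)) = (Nat.factorial k : ℝ) / ((Nat.factorial l : ℝ) * (Nat.factorial (k-l) : ℝ)) := by
        rw [Nat.cast_choose ℝ hl]
      have e2 : ((n.choose i : ℝ)) = (Nat.factorial n : ℝ) / ((Nat.factorial i : ℝ) * (Nat.factorial (n-i) : ℝ)) := by
        rw [Nat.cast_choose ℝ hi]
      have e3 : (((n-k).choose (i-l) : ℝ))
          = (Nat.factorial (n-k) : ℝ) / ((Nat.factorial (i-l) : ℝ) * (Nat.factorial ((n-i)-(k-l)) : ℝ)) := by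
        rw [Nat.cast_choose ℝ hd, show (n-k) - (i-l) = (n-i) - (k-l) from by omega]
      have e4 : ((i.choose l : ℝ)) = (Nat.factorial i : ℝ) / ((Nat.factorial l : ℝ) * (Nat.factorial (i-l) : ℝ)) := by
        rw [Nat.cast_choose ℝ hli]
      have e5 : (((n-i).choose (k-l) : ℝ))
          = (Nat.factorial (n-i) : ℝ) / ((Nat.factorial (k-l) : ℝ) * (Nat.factorial ((n-i)-(k-l)) : ℝ)) := by
        rw [Nat.cast_choose ℝ (by omega : k - l ≤ n - i)]
      rw [e1, e2, e3, e4, e5, pow_add]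
      have f1 : (Nat.factorial l : ℝ) ≠ 0 := by positivity
      have f2 : (Nat.factorial (k-l) : ℝ) ≠ 0 := by positivity
      have f3 : (Nat.factorial i : ℝ) ≠ 0 := by positivity
      have f4 : (Nat.factorial (n-i) : ℝ) ≠ 0 := by positivity
      have f5 : (Nat.factorial (n+k+1) : ℝ) ≠ 0 := by positivity
      have f6 : (Nat.factorial (i-l) : ℝ) ≠ 0 := by positivity
      have f7 : (Nat.factorial ((n-i)-(k-l)) : ℝ) ≠ 0 := by positivity
      have f8 : (Nat.factorial n : ℝ) ≠ 0 := by positivity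
      have f9 : (Nat.factorial (n-k) : ℝ) ≠ 0 := by positivity
      field_simp
    · rw [show ((n-k).choose (i-l)) = 0 from Nat.choose_eq_zero_of_lt (by omega),
        show ((n-i).choose (k-l)) = 0 from Nat.choose_eq_zero_of_lt (by omega)]
      push_cast
      ring
  · rw [if_neg hli, show (i.choose l) = 0 from Nat.choose_eq_zero_of_lt (by omega)]
    push_cast
    ring

/-- `E^{k,n} Π(L^k)` is an eigenvector of `M^n` with eigenvalue
`λ^n_k = (n!)² / ((n+k+1)! (n-k)!)`. -/
theorem bernstein_mass_eigen (n k : ℕ) (hk : k ≤ n) :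
    (bmass n).mulVec ((elev k n).mulVec (legCoeff k)) =
      ((Nat.factorial n : ℝ) ^ 2 /
          ((Nat.factorial (n + k + 1) : ℝ) * (Nat.factorial (n - k) : ℝ))) •
        (elev k n).mulVec (legCoeff k) := by
  funext i
  have hi : (i : ℕ) ≤ n := Fin.is_le i
  simp only [Matrix.mulVec, dotProduct, Pi.smul_apply, smul_eq_mul]
  set c : ℝ := (-1:ℝ)^k * (n.choose i : ℝ) * (Nat.factorial i : ℝ) * (Nat.factorial (n-(i:ℕ)) : ℝ)
      * (Nat.factorial k : ℝ) / (Nat.factorial (n+k+1) : ℝ) with hc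
  -- the key integral computation
  have key : ∀ l : Fin (k+1),
      (∑ j : Fin (n+1), bmass n i j * elev k n j l)
        = (n.choose i : ℝ) * (k.choose (l:ℕ) : ℝ) * (Nat.factorial ((i:ℕ)+(l:ℕ)) : ℝ)
            * (Nat.factorial ((n-(i:ℕ))+(k-(l:ℕ))) : ℝ) / (Nat.factorial (n+k+1) : ℝ) := by
    intro l
    have hl : (l:ℕ) ≤ k := Fin.is_le l
    have step1 : ∀ j : Fin (n+1), bmass n i j * elev k n j l
        = ∫ x in (0:ℝ)..1, bern n i x * bern n j x * elev k n j l := by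
      intro j
      rw [bmass, ← intervalIntegral.integral_mul_const]
    rw [Finset.sum_congr rfl (fun j _ => step1 j)]
    rw [← intervalIntegral.integral_finset_sum]
    swap
    · intro j _
      exact (((bern_cont n i).mul (bern_cont n j)).mul continuous_const).intervalIntegrable 0 1
    have integrand : ∀ x : ℝ,
        ∑ j : Fin (n+1), bern n i x * bern n j x * elev k n j l
          = bern n (i:ℕ) x * bern k (l:ℕ) x := by
      intro x
      have h1 : ∑ j : Fin (n+1), bern n i x * bern n j x * elev k n j l
          = bern n i x * ∑ j : Fin (n+1), elev k n j l * bern n j x := by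
        rw [Finset.mul_sum]
        apply Finset.sum_congr rfl
        intro j _
        ring
      rw [h1]
      have h2 : ∑ j : Fin (n+1), elev k n j l * bern n (j:ℕ) x
          = ∑ j ∈ range (n+1),
              (if (l:ℕ) ≤ j then ((k.choose (l:ℕ) : ℝ) * ((n-k).choose (j - (l:ℕ)) : ℝ) / (n.choose j : ℝ)) else 0)
                * bern n j x := by
        rw [← Fin.sum_univ_eq_sum_range (fun j =>
          (if (l:ℕ) ≤ j then ((k.choose (l:ℕ) : ℝ) * ((n-k).choose (j - (l:ℕ)) : ℝ) / (n.choose j : ℝ)) else 0)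
            * bern n j x) (n+1)]
        apply Finset.sum_congr rfl
        intro j _
        rfl
      rw [h2, elev_sum hk hl x]
    rw [intervalIntegral.integral_congr (fun x _ => integrand x)]
    exact bern_int hi hl
  -- LHS: swap the sums
  have swap1 : ∑ j : Fin (n+1), bmass n i j * ∑ l : Fin (k+1), elev k n j l * legCoeff k l
      = ∑ l : Fin (k+1), (∑ j : Fin (n+1), bmass n i j * elev k n j l) * legCoeff k l := by
    simp only [Finset.mul_sum]
    rw [Finset.sum_comm]
    apply Finset.sum_congr rfl
    intro l _
    rw [Finset.sum_mul]
    apply Finset.sum_congr rfl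
    intro j _
    ring
  rw [swap1, Finset.sum_congr rfl (fun l _ => by rw [key l])]
  -- convert both sides to range sums
  rw [show ∑ l : Fin (k+1),
        ((n.choose i : ℝ) * (k.choose (l:ℕ) : ℝ) * (Nat.factorial ((i:ℕ)+(l:ℕ)) : ℝ)
          * (Nat.factorial ((n-(i:ℕ))+(k-(l:ℕ))) : ℝ) / (Nat.factorial (n+k+1) : ℝ)) * legCoeff k l
      = ∑ l ∈ range (k+1),
          ((-1:ℝ)^(k+l) * (k.choose l : ℝ)) *
            ((n.choose i : ℝ) * (k.choose l : ℝ) * (Nat.factorial ((i:ℕ)+l) : ℝ)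
              * (Nat.factorial ((n-(i:ℕ))+(k-l)) : ℝ) / (Nat.factorial (n+k+1) : ℝ))
      from by
        rw [← Fin.sum_univ_eq_sum_range]
        apply Finset.sum_congr rfl
        intro l _
        rw [legCoeff]
        ring]
  rw [show ∑ l : Fin (k+1), elev k n i l * legCoeff k l
      = ∑ l ∈ range (k+1),
          (if l ≤ (i:ℕ) then (k.choose l : ℝ) * ((n-k).choose ((i:ℕ)-l) : ℝ) / (n.choose i : ℝ) else 0) *
            ((-1:ℝ)^(k+l) * (k.choose l : ℝ))
      from by
        rw [← Fin.sum_univ_eq_sum_range]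
        apply Finset.sum_congr rfl
        intro l _
        rw [legCoeff, elev]]
  rw [Finset.mul_sum]
  have hL : ∀ l ∈ range (k+1),
      ((-1:ℝ)^(k+l) * (k.choose l : ℝ)) *
          ((n.choose i : ℝ) * (k.choose l : ℝ) * (Nat.factorial ((i:ℕ)+l) : ℝ)
            * (Nat.factorial ((n-(i:ℕ))+(k-l)) : ℝ) / (Nat.factorial (n+k+1) : ℝ))
        = c * ((-1:ℝ)^l * (k.choose l : ℝ) * ((((i:ℕ)+l).choose (i:ℕ) : ℝ))
            * ((((n-(i:ℕ))+(k-l)).choose (n-(i:ℕ)) : ℝ)) ) := by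
    intro l hl
    rw [mem_range] at hl
    rw [hc]
    exact lhs_term hk hi (by omega)
  have hR : ∀ l ∈ range (k+1),
      ((Nat.factorial n : ℝ)^2 / ((Nat.factorial (n+k+1) : ℝ) * (Nat.factorial (n-k) : ℝ))) *
          ((if l ≤ (i:ℕ) then (k.choose l : ℝ) * ((n-k).choose ((i:ℕ)-l) : ℝ) / (n.choose i : ℝ) else 0) *
            ((-1:ℝ)^(k+l) * (k.choose l : ℝ)))
        = c * ((-1:ℝ)^l * (k.choose l : ℝ) * (((i:ℕ).choose l : ℝ)) * (((n-(i:ℕ)).choose (k-l) : ℝ))) := by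
    intro l hl
    rw [mem_range] at hl
    rw [hc]
    exact rhs_term hk hi (by omega)
  rw [Finset.sum_congr rfl hL, Finset.sum_congr rfl hR, ← Finset.mul_sum, ← Finset.mul_sum]
  rw [star k (i:ℕ) (n-(i:ℕ))]
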